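/- On H = ℓ²(ℤ), let D be the (unbounded, self-adjoint, positive) operator De_j = 2ʲ e_j and B the bounded operator Be_j = ∑_{n∈ℤ} b_n e_{j+n} for a summable-symbol sequence (b_n) with b̂ ∈ L^∞. If a bounded operator T on H satisfies TD + DT = DBD on the span of the (e_j), where T has matrix Te_j = ∑_n t_{j,n} e_{j+n}, then necessarily Te_j = 2ʲ ∑_n c_n e_{j+n} with c_n = b_n 2ⁿ/(1+2ⁿ). -/
import Mathlib


open scoped InnerProductSpace

/-- The standard orthonormal basis vector `e_j` of `ℓ²(ℤ)`. -/
noncomputable def eVec (j : ℤ) : lp (fun _ : ℤ => ℂ) 2 := lp.single 2 j (1 : ℂ)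

/-- On `H = ℓ²(ℤ)`, with `D e_j = 2ʲ e_j` and `B e_j = ∑_n b_n e_{j+n}`, if a bounded operator
`T` satisfies `TD + DT = DBD` on the span of the `e_j` (expressed through matrix coefficients
with respect to the orthonormal basis), then necessarily `T e_j = 2ʲ ∑_n c_n e_{j+n}` with
`c_n = b_n 2ⁿ/(1+2ⁿ)`. -/
theorem mcintosh_counterexample_coefficients (b : ℤ → ℂ)
    (hb : Summable fun m : ℤ => ‖b m‖)
    (T : lp (fun _ : ℤ => ℂ) 2 →L[ℂ] lp (fun _ : ℤ => ℂ) 2)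
    (h : ∀ j k : ℤ,
      ((2 : ℂ) ^ j + (2 : ℂ) ^ k) * ⟪eVec k, T (eVec j)⟫_ℂ =
        (2 : ℂ) ^ j * (2 : ℂ) ^ k * b (k - j)) :
    ∀ j k : ℤ,
      ⟪eVec k, T (eVec j)⟫_ℂ =
        (2 : ℂ) ^ j * (b (k - j) * (2 : ℂ) ^ (k - j) / (1 + (2 : ℂ) ^ (k - j))) := by
  intro j k
  have hj : (2 : ℂ) ^ j ≠ 0 := zpow_ne_zero _ (by norm_num)
  have hk : (2 : ℂ) ^ k ≠ 0 := zpow_ne_zero _ (by norm_num)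
  have hre : (2 : ℂ) ^ (k - j) = ((2 : ℝ) ^ (k - j) : ℝ) := by
    push_cast; norm_num
  have hpos : (1 : ℂ) + (2 : ℂ) ^ (k - j) ≠ 0 := by
    rw [hre, ← Complex.ofReal_one, ← Complex.ofReal_add]
    exact_mod_cast ne_of_gt (by positivity : (0:ℝ) < 1 + (2:ℝ) ^ (k - j))
  have hsum : (2 : ℂ) ^ j + (2 : ℂ) ^ k = (2 : ℂ) ^ j * (1 + (2 : ℂ) ^ (k - j)) := by
    rw [mul_add, mul_one, ← zpow_add₀ (by norm_num : (2:ℂ) ≠ 0)]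
    ring_nf
  have hjk : (2 : ℂ) ^ k = (2 : ℂ) ^ j * (2 : ℂ) ^ (k - j) := by
    rw [← zpow_add₀ (by norm_num : (2:ℂ) ≠ 0)]; ring_nf
  have h1 := h j k
  rw [hsum, hjk] at h1
  have h2 : ⟪eVec k, T (eVec j)⟫_ℂ * (1 + (2 : ℂ) ^ (k - j)) =
      (2 : ℂ) ^ j * (2 : ℂ) ^ (k - j) * b (k - j) :=
    mul_left_cancel₀ hj (by linear_combination h1)
  field_simp
  linear_combination h2
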